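/- Let X be an infinite Hausdorff topological space. Then the properties α₂(Γ,Γ), α₃(Γ,Γ), α₄(Γ,Γ) and S₁(Γ,Γ) are all equivalent. -/

import Mathlib

/-!
The implications α₂ ⇒ α₃ ⇒ α₄ and S₁ ⇒ α₄ are immediate, and α₂ ⇒ S₁ holds because an infinite
subfamily of a γ-cover is again a γ-cover, so it suffices to pick pairwise distinct members of the
`B` given by α₂.

For α₄ ⇒ α₂, enumerate each `Aₙ` injectively as `(Uₙ,ᵢ)ᵢ` and apply α₄ to the γ-covers
`{Vₙ,ᵢ : i ≥ n}`, where `Vₙ,ᵢ = U₀,ᵢ ∩ ⋯ ∩ Uₙ,ᵢ`. This yields members `Wⱼ = Vₙⱼ,ᵢⱼ` with `nⱼ → ∞`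
such that every point lies in all but finitely many `Wⱼ`; then `{Uₘ,ᵢⱼ : m ≤ nⱼ}` is a γ-cover
meeting every `Aₘ` in infinitely many members. The selected `Wⱼ` can only fail to have this
property by repeating one set infinitely often, so one first discards the sets that belong to
infinitely many of the families `{Vₙ,ᵢ : i ≥ n}`; if some family contains infinitely many of them,
these alone already form the required sequence.
-/

open Set Filter Pointwise

universe u

/-- The selection principle `S₁(𝒜,ℬ)`: for each sequence of elements of `𝒜` one can pick one
element from each term so that the set of chosen elements belongs to `ℬ`. -/
def S1 {Y : Type u} (cA cB : Set (Set Y)) : Prop :=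
  ∀ A : ℕ → Set Y, (∀ n, A n ∈ cA) →
    ∃ b : ℕ → Y, (∀ n, b n ∈ A n) ∧ Set.range b ∈ cB

/-- `α₁(𝒜,ℬ)`: for each sequence of infinite elements of `𝒜` there is `B ∈ ℬ` such that
`Aₙ \ B` is finite for each `n`. -/
def Alpha1 {Y : Type u} (cA cB : Set (Set Y)) : Prop :=
  ∀ A : ℕ → Set Y, (∀ n, A n ∈ cA ∧ (A n).Infinite) →
    ∃ B ∈ cB, ∀ n, (A n \ B).Finite

/-- `α₂(𝒜,ℬ)`: for each sequence of infinite elements of `𝒜` there is `B ∈ ℬ` such that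
`Aₙ ∩ B` is infinite for each `n`. -/
def Alpha2 {Y : Type u} (cA cB : Set (Set Y)) : Prop :=
  ∀ A : ℕ → Set Y, (∀ n, A n ∈ cA ∧ (A n).Infinite) →
    ∃ B ∈ cB, ∀ n, (A n ∩ B).Infinite

/-- `α₃(𝒜,ℬ)`: for each sequence of infinite elements of `𝒜` there is `B ∈ ℬ` such that
`Aₙ ∩ B` is infinite for infinitely many `n`. -/
def Alpha3 {Y : Type u} (cA cB : Set (Set Y)) : Prop :=
  ∀ A : ℕ → Set Y, (∀ n, A n ∈ cA ∧ (A n).Infinite) →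
    ∃ B ∈ cB, {n : ℕ | (A n ∩ B).Infinite}.Infinite

/-- `α₄(𝒜,ℬ)`: for each sequence of infinite elements of `𝒜` there is `B ∈ ℬ` such that
`Aₙ ∩ B` is nonempty for infinitely many `n`. -/
def Alpha4 {Y : Type u} (cA cB : Set (Set Y)) : Prop :=
  ∀ A : ℕ → Set Y, (∀ n, A n ∈ cA ∧ (A n).Infinite) →
    ∃ B ∈ cB, {n : ℕ | (A n ∩ B).Nonempty}.Infinite

/-- An ω-cover: a nontrivial open cover such that every finite set lies in some member. -/
def IsOmegaCover {Y : Type u} [TopologicalSpace Y] (cU : Set (Set Y)) : Prop :=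
  (∀ U ∈ cU, IsOpen U) ∧ ⋃₀ cU = Set.univ ∧ Set.univ ∉ cU ∧
    ∀ F : Set Y, F.Finite → ∃ U ∈ cU, F ⊆ U

/-- A k-cover: a nontrivial open cover such that every compact set lies in some member. -/
def IsKCover {Y : Type u} [TopologicalSpace Y] (cU : Set (Set Y)) : Prop :=
  (∀ U ∈ cU, IsOpen U) ∧ ⋃₀ cU = Set.univ ∧ Set.univ ∉ cU ∧
    ∀ K : Set Y, IsCompact K → ∃ U ∈ cU, K ⊆ U

/-- A γ-cover: an infinite open cover such that each finite set is contained in all but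
finitely many members. -/
def IsGammaCover {Y : Type u} [TopologicalSpace Y] (cU : Set (Set Y)) : Prop :=
  (∀ U ∈ cU, IsOpen U) ∧ ⋃₀ cU = Set.univ ∧ cU.Infinite ∧
    ∀ F : Set Y, F.Finite → {U ∈ cU | ¬ F ⊆ U}.Finite

/-- A γₖ-cover: an infinite open cover such that each compact set is contained in all but
finitely many members. -/
def IsGammaKCover {Y : Type u} [TopologicalSpace Y] (cU : Set (Set Y)) : Prop :=
  (∀ U ∈ cU, IsOpen U) ∧ ⋃₀ cU = Set.univ ∧ cU.Infinite ∧
    ∀ K : Set Y, IsCompact K → {U ∈ cU | ¬ K ⊆ U}.Finite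

/-- `Ω`: the collection of ω-covers of `Y`. -/
def OmegaCovers (Y : Type u) [TopologicalSpace Y] : Set (Set (Set Y)) :=
  {cU | IsOmegaCover cU}

/-- `𝒦`: the collection of k-covers of `Y`. -/
def KCovers (Y : Type u) [TopologicalSpace Y] : Set (Set (Set Y)) :=
  {cU | IsKCover cU}

/-- `Γ`: the collection of γ-covers of `Y`. -/
def GammaCovers (Y : Type u) [TopologicalSpace Y] : Set (Set (Set Y)) :=
  {cU | IsGammaCover cU}

/-- `Γₖ`: the collection of γₖ-covers of `Y`. -/
def GammaKCovers (Y : Type u) [TopologicalSpace Y] : Set (Set (Set Y)) :=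
  {cU | IsGammaKCover cU}

/-- `Y` is ω-Lindelöf if every ω-cover contains a countable ω-cover. -/
def OmegaLindelof (Y : Type u) [TopologicalSpace Y] : Prop :=
  ∀ cU : Set (Set Y), IsOmegaCover cU →
    ∃ cV ⊆ cU, cV.Countable ∧ IsOmegaCover cV

/-- `Y` is k-Lindelöf if every k-cover contains a countable k-cover. -/
def KLindelof (Y : Type u) [TopologicalSpace Y] : Prop :=
  ∀ cU : Set (Set Y), IsKCover cU →
    ∃ cV ⊆ cU, cV.Countable ∧ IsKCover cV

/-- `Ω_y`: subsets of `Y \ {y}` having `y` in their closure. -/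
def OmegaPt {Y : Type u} [TopologicalSpace Y] (y : Y) : Set (Set Y) :=
  {A | A ⊆ {y}ᶜ ∧ y ∈ closure A}

/-- `Σ_y`: (ranges of) nontrivial sequences in `Y` converging to `y`. -/
def SigmaPt {Y : Type u} [TopologicalSpace Y] (y : Y) : Set (Set Y) :=
  {S | ∃ f : ℕ → Y, (∀ n, f n ≠ y) ∧
    Filter.Tendsto f Filter.atTop (nhds y) ∧ S = Set.range f}

/-- `2^X`: the hyperspace of closed subsets of `X`. -/
abbrev HClosed (X : Type u) [TopologicalSpace X] : Type u := {F : Set X // IsClosed F}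

/-- The upper Fell topology on `2^X`, generated by the base
`{(Kᶜ)⁺ : K nonempty compact} ∪ {univ}`. -/
instance fellTopology (X : Type u) [TopologicalSpace X] : TopologicalSpace (HClosed X) :=
  TopologicalSpace.generateFrom
    ({S | ∃ K : Set X, IsCompact K ∧ K.Nonempty ∧ S = {F : HClosed X | F.1 ⊆ Kᶜ}} ∪
      {Set.univ})

/-- `𝕂(X)`: the hyperspace of nonempty compact subsets of `X`. -/
abbrev KSp (X : Type u) [TopologicalSpace X] : Type u := {K : Set X // IsCompact K ∧ K.Nonempty}

/-- The upper Vietoris topology on `𝕂(X)`, generated by the base of sets `U⁺`, `U` open. -/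
instance upperVietorisK (X : Type u) [TopologicalSpace X] : TopologicalSpace (KSp X) :=
  TopologicalSpace.generateFrom
    {S | ∃ U : Set X, IsOpen U ∧ S = {K : KSp X | K.1 ⊆ U}}

/-- `𝔽(X)`: the hyperspace of nonempty finite subsets of `X`. -/
abbrev FSp (X : Type u) [TopologicalSpace X] : Type u := {F : Set X // F.Finite ∧ F.Nonempty}

/-- The upper Vietoris topology on `𝔽(X)`, generated by the base of sets `U⁺`, `U` open. -/
instance upperVietorisF (X : Type u) [TopologicalSpace X] : TopologicalSpace (FSp X) :=
  TopologicalSpace.generateFrom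
    {S | ∃ U : Set X, IsOpen U ∧ S = {F : FSp X | F.1 ⊆ U}}

/-- For a topological group `G` with local base `Be` at the neutral element:
`Ω(e) = {ω(U) : U ∈ Be, no nonempty finite F with F·U = G}` where
`ω(U) = {F·U : F nonempty finite}`. -/
def OmegaE {G : Type u} [Group G] (Be : Set (Set G)) : Set (Set (Set G)) :=
  {cU | ∃ U ∈ Be,
    (¬ ∃ F : Set G, F.Finite ∧ F.Nonempty ∧ F * U = Set.univ) ∧
    cU = {V | ∃ F : Set G, F.Finite ∧ F.Nonempty ∧ V = F * U}}

/-- For a topological group `G` with local base `Be` at the neutral element: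
`𝒦(e) = {k(U) : U ∈ Be, no nonempty compact K with K·U = G}` where
`k(U) = {K·U : K nonempty compact}`. -/
def KcalE {G : Type u} [Group G] [TopologicalSpace G] (Be : Set (Set G)) :
    Set (Set (Set G)) :=
  {cU | ∃ U ∈ Be,
    (¬ ∃ K : Set G, IsCompact K ∧ K.Nonempty ∧ K * U = Set.univ) ∧
    cU = {V | ∃ K : Set G, IsCompact K ∧ K.Nonempty ∧ V = K * U}}

/-- Player ONE has a winning strategy in the game `G₁(𝒜,ℬ)`: a strategy assigns to each finite
sequence of TWO's previous moves a member of `𝒜`; it is winning if for every play in which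
TWO's moves follow it, the set of TWO's moves is not in `ℬ`. -/
def OneHasWinningStrategy {Y : Type u} (cA cB : Set (Set Y)) : Prop :=
  ∃ σ : List Y → Set Y, (∀ l : List Y, σ l ∈ cA) ∧
    ∀ b : ℕ → Y, (∀ n, b n ∈ σ (List.ofFn fun i : Fin n => b i)) → Set.range b ∉ cB

theorem exists_injective_forall_mem {α : Type*} {S : ℕ → Set α}
    (hS : ∀ n, (S n).Infinite) : ∃ b : ℕ → α, Function.Injective b ∧ ∀ n, b n ∈ S n := by
  classical
  choose g hgS hg using fun n (t : Finset α) => (hS n).exists_notMem_finset t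
  -- `c n` collects the first `n` choices, which the `n`-th choice avoids
  let c : ℕ → Finset α := fun n => Nat.rec ∅ (fun k t => insert (g k t) t) n
  have hc : ∀ m n, m < n → g m (c m) ∈ c n := fun m n hmn => by
    induction n, hmn using Nat.le_induction with
    | base => exact Finset.mem_insert_self _ _
    | succ n _ ih => exact Finset.mem_insert_of_mem ih
  exact ⟨fun n => g n (c n), .of_lt_imp_ne fun m n hmn h => hg n (c n) (h ▸ hc m n hmn),
    fun n => hgS n (c n)⟩

theorem Filter.Tendsto.infinite_image_nat {ι : Type*} {l : Filter ι} [l.NeBot]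
    {i : ι → ℕ} (hi : Tendsto i l atTop) {s : Set ι} (hs : s ∈ l) : (i '' s).Infinite :=
  infinite_of_not_bddAbove fun ⟨b, hb⟩ =>
    let ⟨_, hj, hjs⟩ := ((hi.eventually_gt_atTop b).and hs).exists
    hj.not_ge (hb (mem_image_of_mem i hjs))

theorem infinite_image_of_eventually_mem {X ι : Type*} {l : Filter ι} [l.NeBot]
    {f : ι → Set X} (hf : ∀ x, ∀ᶠ i in l, x ∈ f i) (hne : ∀ᶠ i in l, f i ≠ univ)
    {s : Set ι} (hs : s ∈ l) : (f '' s).Infinite := by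
  intro hfin
  have hmiss : ∀ P ∈ f '' s, ∀ᶠ i in l, P = univ ∨ f i ≠ P := fun P _ => by
    by_cases hP : P = univ
    · exact .of_forall fun _ => .inl hP
    · obtain ⟨x, hx⟩ := (ne_univ_iff_exists_notMem P).1 hP
      exact (hf x).mono fun i hi => .inr fun h => hx (h ▸ hi)
  obtain ⟨i, hi, hfi, his⟩ := ((eventually_all_finite hfin).2 hmiss).and (hne.and hs) |>.exists
  exact (hi _ (mem_image_of_mem f his)).elim hfi (· rfl)

section Implications

variable {Y : Type u} {cA cB : Set (Set Y)}

theorem Alpha2.alpha3 (h : Alpha2 cA cB) : Alpha3 cA cB := fun A hA =>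
  let ⟨B, hB, hAB⟩ := h A hA
  ⟨B, hB, infinite_univ.mono fun n _ => hAB n⟩

theorem Alpha3.alpha4 (h : Alpha3 cA cB) : Alpha4 cA cB := fun A hA =>
  let ⟨B, hB, hAB⟩ := h A hA
  ⟨B, hB, hAB.mono fun _ hn => hn.nonempty⟩

theorem S1.alpha4 (h : S1 cA cB) : Alpha4 cA cB := fun A hA =>
  let ⟨b, hb, hB⟩ := h A fun n => (hA n).1
  ⟨range b, hB, infinite_univ.mono fun n _ => ⟨b n, hb n, mem_range_self n⟩⟩

end Implications

section GammaCover

variable {X : Type u} [TopologicalSpace X] {C : Set (Set X)}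

theorem isGammaCover_iff :
    IsGammaCover C ↔
      (∀ U ∈ C, IsOpen U) ∧ C.Infinite ∧ ∀ x : X, {U ∈ C | x ∉ U}.Finite := by
  refine ⟨fun ⟨hop, _, hinf, hfin⟩ => ⟨hop, hinf, fun x => ?_⟩,
    fun ⟨hop, hinf, hfin⟩ => ⟨hop, ?_, hinf, fun F hF => ?_⟩⟩
  · simpa using hfin {x} (finite_singleton x)
  · refine sUnion_eq_univ_iff.2 fun x => ?_
    obtain ⟨U, hUC, hxU⟩ := (hinf.sdiff (hfin x)).nonempty
    exact ⟨U, hUC, by simpa [hUC] using hxU⟩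
  · refine (hF.biUnion fun x _ => hfin x).subset fun U ⟨hUC, hFU⟩ => ?_
    obtain ⟨x, hxF, hxU⟩ := not_subset.1 hFU
    exact mem_biUnion hxF ⟨hUC, hxU⟩

theorem IsGammaCover.finite_setOf_notMem (hC : IsGammaCover C) (x : X) :
    {U ∈ C | x ∉ U}.Finite :=
  (isGammaCover_iff.1 hC).2.2 x

theorem IsGammaCover.mono {B : Set (Set X)} (hC : IsGammaCover C) (hBC : B ⊆ C)
    (hB : B.Infinite) : IsGammaCover B :=
  isGammaCover_iff.2 ⟨fun U hU => hC.1 U (hBC hU), hB,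
    fun x => (hC.finite_setOf_notMem x).subset fun _ ⟨hU, hxU⟩ => ⟨hBC hU, hxU⟩⟩

theorem IsGammaCover.eventually_mem {ι : Type*} {l : Filter ι} {f : ι → Set X}
    (hC : IsGammaCover C) (hfC : ∀ i, f i ∈ C) (hf : Tendsto f l cofinite) (x : X) :
    ∀ᶠ i in l, x ∈ f i :=
  (hf.eventually (hC.finite_setOf_notMem x).eventually_cofinite_notMem).mono
    fun i hi => by_contra fun hx => hi ⟨hfC i, hx⟩

theorem isGammaCover_image_Ici {f : ℕ → Set X} (hfo : ∀ i, IsOpen (f i))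
    (hf : ∀ x, ∀ᶠ i in cofinite, x ∈ f i) (hne : ∀ᶠ i in cofinite, f i ≠ univ) (n : ℕ) :
    IsGammaCover (f '' Ici n) := by
  refine isGammaCover_iff.2 ⟨?_, infinite_image_of_eventually_mem hf hne ?_, fun x => ?_⟩
  · rintro _ ⟨i, -, rfl⟩
    exact hfo i
  · simpa only [Nat.cofinite_eq_atTop] using Ici_mem_atTop n
  · refine ((eventually_cofinite.1 (hf x)).image f).subset ?_
    rintro _ ⟨⟨i, -, rfl⟩, hx⟩
    exact ⟨i, hx, rfl⟩

theorem Alpha2.s1 (h2 : Alpha2 (GammaCovers X) (GammaCovers X)) :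
    S1 (GammaCovers X) (GammaCovers X) := fun A hA =>
  let ⟨_, hB, hAB⟩ := h2 A fun n => ⟨hA n, (hA n).2.2.1⟩
  let ⟨b, hbi, hb⟩ := exists_injective_forall_mem hAB
  ⟨b, fun n => (hb n).1, IsGammaCover.mono hB (range_subset_iff.2 fun n => (hb n).2)
    (infinite_range_of_injective hbi)⟩

variable {cB : ℕ → Set (Set X)}

theorem exists_seq_of_infinite_inter {n₀ : ℕ} (hn₀ : IsGammaCover (cB n₀))
    (hR : (cB n₀ ∩ {P | {n | P ∈ cB n}.Infinite}).Infinite) :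
    ∃ (W : ℕ → Set X) (n : ℕ → ℕ), Tendsto n atTop atTop ∧ (∀ j, W j ∈ cB (n j)) ∧
      ∀ x, ∀ᶠ j in cofinite, x ∈ W j := by
  let e := hR.natEmbedding
  choose n hn hjn using fun j => Infinite.exists_gt (e j).2.2 j
  exact ⟨_, n, tendsto_atTop_mono (fun j => (hjn j).le) tendsto_id, hn,
    hn₀.eventually_mem (fun j => (e j).2.1)
      (Subtype.val_injective.comp e.injective).tendsto_cofinite⟩

theorem Alpha4.exists_seq_of_finite_inter (h4 : Alpha4 (GammaCovers X) (GammaCovers X))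
    (hcB : ∀ n, IsGammaCover (cB n)) (hR : ∀ n, (cB n ∩ {P | {n | P ∈ cB n}.Infinite}).Finite) :
    ∃ (W : ℕ → Set X) (n : ℕ → ℕ), Tendsto n atTop atTop ∧ (∀ j, W j ∈ cB (n j)) ∧
      ∀ x, ∀ᶠ j in cofinite, x ∈ W j := by
  set R := {P | {n | P ∈ cB n}.Infinite}
  have hD : ∀ n, (cB n \ R).Infinite := fun n => by
    simpa only [sdiff_self_inter] using (hcB n).2.2.1.sdiff (hR n)
  obtain ⟨B, hB, hfreq⟩ :=
    h4 (fun n => cB n \ R) fun n => ⟨(hcB n).mono sdiff_subset (hD n), hD n⟩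
  obtain ⟨φ, hφ, hφB⟩ :=
    extraction_of_frequently_atTop (Nat.frequently_atTop_iff_infinite.2 hfreq)
  choose W hWcB hWB using hφB
  -- no `W j` lies in `R`, so each value is taken only finitely often
  have hW : Tendsto W cofinite cofinite := by
    refine Tendsto.cofinite_of_finite_preimage_singleton fun P => Finite.to_subtype ?_
    rcases eq_empty_or_nonempty (W ⁻¹' {P}) with h | ⟨j, rfl⟩
    · exact h ▸ finite_empty
    · refine ((not_infinite.1 (hWcB j).2).preimage hφ.injective.injOn).subset fun k hk => ?_
      exact (hk : W k = W j) ▸ (hWcB k).1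
  exact ⟨W, φ, hφ.tendsto_atTop, fun j => (hWcB j).1, hB.eventually_mem hWB hW⟩

theorem Alpha4.exists_seq (h4 : Alpha4 (GammaCovers X) (GammaCovers X))
    (hcB : ∀ n, IsGammaCover (cB n)) :
    ∃ (W : ℕ → Set X) (n : ℕ → ℕ), Tendsto n atTop atTop ∧ (∀ j, W j ∈ cB (n j)) ∧
      ∀ x, ∀ᶠ j in cofinite, x ∈ W j := by
  by_cases h : ∃ n₀, (cB n₀ ∩ {P | {n | P ∈ cB n}.Infinite}).Infinite
  · obtain ⟨n₀, hn₀⟩ := h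
    exact exists_seq_of_infinite_inter (hcB n₀) hn₀
  · exact h4.exists_seq_of_finite_inter hcB fun n => not_infinite.1 fun hn => h ⟨n, hn⟩

theorem exists_gammaCover_of_seq {U : ℕ → ℕ → Set X} (hUo : ∀ m i, IsOpen (U m i))
    (hUi : ∀ m, Function.Injective (U m)) {W : ℕ → Set X} {n i : ℕ → ℕ}
    (hn : Tendsto n atTop atTop) (hi : Tendsto i atTop atTop)
    (hWU : ∀ j, ∀ m ≤ n j, W j ⊆ U m (i j)) (hW : ∀ x, ∀ᶠ j in cofinite, x ∈ W j) :
    ∃ B ∈ GammaCovers X, ∀ m, (range (U m) ∩ B).Infinite := by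
  let B := (fun p : ℕ × ℕ => U p.1 (i p.2)) '' {p | p.1 ≤ n p.2}
  have hBU : ∀ m, U m '' (i '' {j | m ≤ n j}) ⊆ range (U m) ∩ B := by
    rintro m _ ⟨_, ⟨j, hj, rfl⟩, rfl⟩
    exact ⟨mem_range_self _, (m, j), hj, rfl⟩
  have hBinf : ∀ m, (range (U m) ∩ B).Infinite := fun m =>
    ((hi.infinite_image_nat (hn.eventually_ge_atTop m)).image (hUi m).injOn).mono (hBU m)
  refine ⟨B, isGammaCover_iff.2 ⟨?_, (hBinf 0).mono inter_subset_right, fun x => ?_⟩, hBinf⟩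
  · rintro _ ⟨p, -, rfl⟩
    exact hUo _ _
  · refine ((eventually_cofinite.1 (hW x)).biUnion
      fun j _ => (finite_Iic (n j)).image fun m => U m (i j)).subset ?_
    rintro _ ⟨⟨⟨m, j⟩, hmj, rfl⟩, hx⟩
    exact mem_biUnion (fun hxW => hx (hWU j m hmj hxW)) ⟨m, hmj, rfl⟩

theorem Alpha4.alpha2 (h4 : Alpha4 (GammaCovers X) (GammaCovers X)) :
    Alpha2 (GammaCovers X) (GammaCovers X) := by
  intro A hA
  have hUA : ∀ m, ∃ U : ℕ → Set X, Function.Injective U ∧ ∀ i, U i ∈ A m := fun m =>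
    let e := (hA m).2.natEmbedding
    ⟨fun i => e i, Subtype.val_injective.comp e.injective, fun i => (e i).2⟩
  choose U hUi hUA using hUA
  have hUo : ∀ m i, IsOpen (U m i) := fun m i => (hA m).1.1 _ (hUA m i)
  let V : ℕ → ℕ → Set X := fun n i => ⋂ m ∈ Iic n, U m i
  have hVU : ∀ n i, ∀ m ≤ n, V n i ⊆ U m i := fun n i m hm => biInter_subset_of_mem hm
  have hV : ∀ n x, ∀ᶠ i in cofinite, x ∈ V n i := fun n x => by
    simpa only [V, mem_iInter₂] using (eventually_all_finite (finite_Iic n)).2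
      fun m _ => (hA m).1.eventually_mem (hUA m) (hUi m).tendsto_cofinite x
  have hVne : ∀ n, ∀ᶠ i in cofinite, V n i ≠ univ := fun n =>
    ((hUi 0).tendsto_cofinite.eventually (eventually_cofinite_ne univ)).mono
      fun i hi hVi => hi (univ_subset_iff.1 (hVi ▸ hVU n i 0 (Nat.zero_le n)))
  have hcB : ∀ n, IsGammaCover (V n '' Ici n) := fun n =>
    isGammaCover_image_Ici (fun i => (finite_Iic n).isOpen_biInter fun m _ => hUo m i)
      (hV n) (hVne n) n
  obtain ⟨W, n, hn, hWcB, hW⟩ := h4.exists_seq hcB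
  choose i hni hWi using hWcB
  obtain ⟨B, hB, hBU⟩ := exists_gammaCover_of_seq hUo hUi hn (tendsto_atTop_mono hni hn)
    (fun j m hm => hWi j ▸ hVU _ _ m hm) hW
  exact ⟨B, hB, fun m => (hBU m).mono (inter_subset_inter_left _ (range_subset_iff.2 (hUA m)))⟩

end GammaCover

theorem stmt5_general (X : Type u) [TopologicalSpace X] :
    [Alpha2 (GammaCovers X) (GammaCovers X),
     Alpha3 (GammaCovers X) (GammaCovers X),
     Alpha4 (GammaCovers X) (GammaCovers X),
     S1 (GammaCovers X) (GammaCovers X)].TFAE := by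
  tfae_have 1 → 2 := Alpha2.alpha3
  tfae_have 2 → 3 := Alpha3.alpha4
  tfae_have 3 → 1 := Alpha4.alpha2
  tfae_have 1 → 4 := Alpha2.s1
  tfae_have 4 → 3 := S1.alpha4
  tfae_finish

/-- Theorem (α₂/α₃/α₄/S₁ for (Γ,Γ)). -/
theorem stmt5 (X : Type u) [TopologicalSpace X] [T2Space X] [Infinite X] :
    [Alpha2 (GammaCovers X) (GammaCovers X),
     Alpha3 (GammaCovers X) (GammaCovers X),
     Alpha4 (GammaCovers X) (GammaCovers X),
     S1 (GammaCovers X) (GammaCovers X)].TFAE :=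
  stmt5_general X
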